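/- Define strings g_0, ..., g_N by g_0 = "1" and g_i = concatenation over j = 1,...,B of (g_{i-1} if B(i−1)+j ∉ Y, else 0^{B^{i-1}}). Then g_N has length B^N, and for every blocked set X ⊆ {1,...,B·N} of cardinality N, writing the encoding pos(X) = ∑_{i=1}^{N} (x_i − 1)·B^{i-1} where x_i ∈ {1,...,B} indexes the element of X in block i, the character of g_N at position pos(X) is 1 if and only if X ∩ Y = ∅. -/
import Mathlib

/-- The string `g_i` for Blocked LSD: `g_0 = "1"` and `g_i` is the concatenation over
`j = 1,...,B` of `g_{i-1}` if `B(i-1)+j ∉ Y`, else `0^{B^{i-1}}`. -/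
def gBLSD (B : ℕ) (Y : Finset ℕ) : ℕ → List Bool
  | 0 => [true]
  | (i + 1) =>
      (List.range B).flatMap fun j =>
        if B * i + (j + 1) ∈ Y then List.replicate (B ^ i) false else gBLSD B Y i

lemma gBLSD_length (B : ℕ) (Y : Finset ℕ) : ∀ i, (gBLSD B Y i).length = B ^ i := by
  intro i
  induction i with
  | zero => simp [gBLSD]
  | succ n ih =>
    simp only [gBLSD, List.length_flatMap]
    have : ∀ j ∈ List.range B,
        (if B * n + (j + 1) ∈ Y then List.replicate (B ^ n) false
          else gBLSD B Y n).length = B ^ n := by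
      intro j _; split <;> simp [ih]
    rw [List.map_congr_left this]
    simp [pow_succ, mul_comm]

lemma digits_lt (B : ℕ) (hB : 1 ≤ B) :
    ∀ n (f : Fin n → ℕ), (∀ i, f i < B) → (∑ i : Fin n, f i * B ^ (i : ℕ)) < B ^ n := by
  intro n
  induction n with
  | zero => intro f _; simp
  | succ n ih =>
    intro f hf
    have hs : (∑ i : Fin n, f i.castSucc * B ^ (i : ℕ)) < B ^ n :=
      ih (fun i => f i.castSucc) (fun i => hf _)
    rw [Fin.sum_univ_castSucc]
    calc (∑ i : Fin n, f i.castSucc * B ^ (i : ℕ)) + f (Fin.last n) * B ^ n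
        < B ^ n + f (Fin.last n) * B ^ n := by omega
      _ = (f (Fin.last n) + 1) * B ^ n := by ring
      _ ≤ B * B ^ n := Nat.mul_le_mul_right _ (hf (Fin.last n))
      _ = B ^ (n + 1) := by ring

lemma flatten_getD {α : Type*} (d : α) (L : ℕ) :
    ∀ (ls : List (List α)) (k p : ℕ), (∀ l ∈ ls, l.length = L) → k < ls.length → p < L →
    ls.flatten.getD (k * L + p) d = (ls.getD k []).getD p d := by
  intro ls
  induction ls with
  | nil => intro k p _ hk _; simp at hk
  | cons l ls ih =>
    intro k p hlen hk hp
    have hl : l.length = L := hlen l (by simp)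
    cases k with
    | zero =>
      simp only [Nat.zero_mul, Nat.zero_add, List.flatten_cons, List.getD_cons_zero]
      rw [List.getD_eq_getElem?_getD, List.getElem?_append_left (by omega),
        ← List.getD_eq_getElem?_getD]
    | succ k =>
      have harith : (k + 1) * L + p = l.length + (k * L + p) := by
        rw [hl]; ring
      simp only [List.flatten_cons, List.getD_cons_succ]
      rw [List.getD_eq_getElem?_getD, harith, List.getElem?_append_right (by omega),
        Nat.add_sub_cancel_left, ← List.getD_eq_getElem?_getD]
      exact ih k p (fun x hx => hlen x (by simp [hx])) (by simpa using hk) hp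

lemma gBLSD_getD (B : ℕ) (Y : Finset ℕ) (hB : 1 ≤ B) :
    ∀ n (a : Fin n → Fin B),
      ((gBLSD B Y n).getD (∑ i : Fin n, (a i : ℕ) * B ^ (i : ℕ)) false = true ↔
        ∀ i : Fin n, B * (i : ℕ) + (a i : ℕ) + 1 ∉ Y) := by
  intro n
  induction n with
  | zero => intro a; simp [gBLSD]
  | succ n ih =>
    intro a
    set k : ℕ := (a (Fin.last n) : ℕ) with hk
    set p : ℕ := ∑ i : Fin n, ((a i.castSucc : ℕ)) * B ^ (i : ℕ) with hp
    have hsum : ∑ i : Fin (n + 1), (a i : ℕ) * B ^ (i : ℕ) = k * B ^ n + p := by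
      rw [Fin.sum_univ_castSucc]
      simp only [Fin.val_last, Fin.coe_castSucc]
      ring
    have hplt : p < B ^ n := digits_lt B hB n _ (fun i => (a i.castSucc).isLt)
    have hkB : k < B := (a (Fin.last n)).isLt
    set f : ℕ → List Bool := fun j =>
      if B * n + (j + 1) ∈ Y then List.replicate (B ^ n) false else gBLSD B Y n with hf
    have hlen : ∀ l ∈ (List.range B).map f, l.length = B ^ n := by
      intro l hl
      obtain ⟨j, _, rfl⟩ := List.mem_map.mp hl
      simp only [hf]; split <;> simp [gBLSD_length]
    have hgetk : ((List.range B).map f).getD k [] = f k := by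
      rw [List.getD_eq_getElem?_getD, List.getElem?_map, List.getElem?_range hkB]
      rfl
    have key : (gBLSD B Y (n + 1)).getD (∑ i : Fin (n + 1), (a i : ℕ) * B ^ (i : ℕ)) false
        = (f k).getD p false := by
      rw [hsum]
      show ((List.range B).flatMap f).getD (k * B ^ n + p) false = _
      rw [List.flatMap_def, flatten_getD false (B ^ n) _ k p hlen (by simpa using hkB) hplt,
        hgetk]
    rw [key]
    have hforall : (∀ i : Fin (n + 1), B * (i : ℕ) + (a i : ℕ) + 1 ∉ Y) ↔
        ((∀ i : Fin n, B * (i : ℕ) + (a i.castSucc : ℕ) + 1 ∉ Y) ∧ (B * n + (k + 1) ∉ Y)) := by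
      constructor
      · intro h
        refine ⟨fun i => h i.castSucc, ?_⟩
        have := h (Fin.last n)
        simpa [hk, Fin.last, Nat.add_assoc] using this
      · rintro ⟨h1, h2⟩ i
        refine Fin.lastCases (motive := fun i => B * (i : ℕ) + (a i : ℕ) + 1 ∉ Y) ?_ ?_ i
        · simpa [hk, Nat.add_assoc] using h2
        · exact h1
    by_cases hY : B * n + (k + 1) ∈ Y
    · simp only [hf, if_pos hY]
      rw [List.getD_eq_getElem?_getD, List.getElem?_replicate]
      simp [hplt, hforall, hY]
    · simp only [hf, if_neg hY]
      rw [hforall, ih (fun i => a i.castSucc)]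
      simp [hY]

/-- `g_N` has length `B^N`, and for every blocked set `X`
(described by a tuple `a : Fin N → Fin B`, the element of block `i+1` being
`B·i + a_i + 1`), the character of `g_N` at position `∑_i a_i · B^i`
is `1` iff `X ∩ Y = ∅`. -/
theorem stmt4 (B N : ℕ) (hB : 1 ≤ B) (hN : 1 ≤ N)
    (Y : Finset ℕ) (hY : Y ⊆ Finset.Icc 1 (B * N)) :
    (gBLSD B Y N).length = B ^ N ∧
      ∀ a : Fin N → Fin B,
        ((gBLSD B Y N).getD (∑ i : Fin N, (a i : ℕ) * B ^ (i : ℕ)) false = true ↔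
          (Finset.image (fun i : Fin N => B * (i : ℕ) + (a i : ℕ) + 1) Finset.univ) ∩ Y
            = ∅) := by
  refine ⟨gBLSD_length B Y N, fun a => ?_⟩
  rw [gBLSD_getD B Y hB N a]
  simp [Finset.eq_empty_iff_forall_notMem, Finset.mem_inter, Finset.mem_image]
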